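/- State occupancy vectors lie in a low-dimensional space: if the MDP transition matrix P ∈ ℝ^{|S×A|×|S|} has rank k, then for every policy π, the normalized discounted state occupancy vector ν_π = (1-γ) Σ_{t≥0} γ^t ν_{π,t} lies in the row span of the (|S×A|+1) × |S| matrix obtained by stacking P and d₀ᵀ; in particular the span of {ν_π : π any policy} has dimension at most k+1. -/
import Mathlib


open scoped BigOperators

/-- Time-`t` state-action marginal distribution of a policy in a finite MDP. -/
noncomputable def marg {S A : Type*} [Fintype S] [Fintype A]
    (d0 : S → ℝ) (P : S → A → S → ℝ) (pol : S → A → ℝ) : ℕ → S → A → ℝ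
  | 0 => fun s a => d0 s * pol s a
  | (t + 1) => fun s' a' => (∑ s, ∑ a, marg d0 P pol t s a * P s a s') * pol s' a'

/-- Normalized discounted state-action occupancy `d_π(s,a)`. -/
noncomputable def occ {S A : Type*} [Fintype S] [Fintype A]
    (γ : ℝ) (d0 : S → ℝ) (P : S → A → S → ℝ) (pol : S → A → ℝ) (s : S) (a : A) : ℝ :=
  (1 - γ) * ∑' t : ℕ, γ ^ t * marg d0 P pol t s a

/-- Expected discounted return `J(π)`. -/
noncomputable def Jret {S A : Type*} [Fintype S] [Fintype A]
    (γ : ℝ) (d0 : S → ℝ) (P : S → A → S → ℝ) (R : S → A → ℝ) (pol : S → A → ℝ) : ℝ :=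
  ∑' t : ℕ, γ ^ t * ∑ s, ∑ a, marg d0 P pol t s a * R s a

/-- Bellman optimality operator `(T Q)(s,a) = R(s,a) + γ Σ_{s'} P(s'|s,a) max_{a'} Q(s',a')`. -/
noncomputable def bellmanT {S A : Type*} [Fintype S] [Fintype A] [Nonempty A]
    (γ : ℝ) (P : S → A → S → ℝ) (R : S → A → ℝ) (Q : S → A → ℝ) (s : S) (a : A) : ℝ :=
  R s a + γ * ∑ s', P s a s' * (⨆ a', Q s' a')

/-- A deterministic policy viewed as a stochastic policy. -/
noncomputable def detPol {S A : Type*} [DecidableEq A] (g : S → A) : S → A → ℝ :=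
  fun s a => if a = g s then 1 else 0
section helpers
variable {S A : Type*} [Fintype S] [Fintype A]
  {γ : ℝ} {d0 : S → ℝ} {P : S → A → S → ℝ} {pol : S → A → ℝ}

lemma marg_nonneg (hd0 : ∀ s, 0 ≤ d0 s) (hP : ∀ s a s', 0 ≤ P s a s')
    (hpol : ∀ s a, 0 ≤ pol s a) : ∀ t s a, 0 ≤ marg d0 P pol t s a
  | 0, s, a => mul_nonneg (hd0 s) (hpol s a)
  | (t+1), s, a => mul_nonneg (Finset.sum_nonneg fun s' _ => Finset.sum_nonneg fun a' _ =>
      mul_nonneg (marg_nonneg hd0 hP hpol t s' a') (hP s' a' s)) (hpol s a)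

lemma marg_sum (hd0sum : ∑ s, d0 s = 1) (hPsum : ∀ s a, ∑ s', P s a s' = 1)
    (hpolsum : ∀ s, ∑ a, pol s a = 1) :
    ∀ t, ∑ s, ∑ a, marg d0 P pol t s a = 1 := by
  intro t
  induction t with
  | zero => simp [marg, ← Finset.mul_sum, hpolsum, hd0sum]
  | succ t ih =>
      simp only [marg, ← Finset.mul_sum, hpolsum, mul_one]
      rw [Finset.sum_comm]
      calc ∑ s, ∑ s', ∑ a, marg d0 P pol t s a * P s a s'
          = ∑ s, ∑ a, marg d0 P pol t s a * ∑ s', P s a s' := by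
            congr 1; ext s; rw [Finset.sum_comm]; simp [Finset.mul_sum]
        _ = 1 := by simp only [hPsum, mul_one]; exact ih

lemma marg_le_one (hd0 : ∀ s, 0 ≤ d0 s) (hP : ∀ s a s', 0 ≤ P s a s')
    (hpol : ∀ s a, 0 ≤ pol s a) (hd0sum : ∑ s, d0 s = 1)
    (hPsum : ∀ s a, ∑ s', P s a s' = 1) (hpolsum : ∀ s, ∑ a, pol s a = 1)
    (t : ℕ) (s : S) (a : A) : marg d0 P pol t s a ≤ 1 := by
  have h1 := marg_sum hd0sum hPsum hpolsum (d0 := d0) (P := P) (pol := pol) t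
  calc marg d0 P pol t s a ≤ ∑ a', marg d0 P pol t s a' :=
        Finset.single_le_sum (fun a' _ => marg_nonneg hd0 hP hpol t s a') (Finset.mem_univ a)
    _ ≤ ∑ s', ∑ a', marg d0 P pol t s' a' :=
        Finset.single_le_sum (f := fun s' => ∑ a', marg d0 P pol t s' a')
          (fun s' _ => Finset.sum_nonneg fun a' _ => marg_nonneg hd0 hP hpol t s' a')
          (Finset.mem_univ s)
    _ = 1 := h1

lemma marg_summable (hγ0 : 0 ≤ γ) (hγ1 : γ < 1)
    (hd0 : ∀ s, 0 ≤ d0 s) (hP : ∀ s a s', 0 ≤ P s a s')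
    (hpol : ∀ s a, 0 ≤ pol s a) (hd0sum : ∑ s, d0 s = 1)
    (hPsum : ∀ s a, ∑ s', P s a s' = 1) (hpolsum : ∀ s, ∑ a, pol s a = 1)
    (s : S) (a : A) : Summable (fun t : ℕ => γ ^ t * marg d0 P pol t s a) := by
  apply Summable.of_nonneg_of_le
    (fun t => mul_nonneg (pow_nonneg hγ0 t) (marg_nonneg hd0 hP hpol t s a))
    (fun t => ?_) (summable_geometric_of_lt_one hγ0 hγ1)
  calc γ ^ t * marg d0 P pol t s a ≤ γ ^ t * 1 := by
        exact mul_le_mul_of_nonneg_left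
          (marg_le_one hd0 hP hpol hd0sum hPsum hpolsum t s a) (pow_nonneg hγ0 t)
    _ = γ ^ t := mul_one _

lemma occ_decomp (hγ0 : 0 ≤ γ) (hγ1 : γ < 1)
    (hd0 : ∀ s, 0 ≤ d0 s) (hP : ∀ s a s', 0 ≤ P s a s')
    (hpol : ∀ s a, 0 ≤ pol s a) (hd0sum : ∑ s, d0 s = 1)
    (hPsum : ∀ s a, ∑ s', P s a s' = 1) (hpolsum : ∀ s, ∑ a, pol s a = 1) :
    (fun s' => ∑ a, occ γ d0 P pol s' a) = (1 - γ) • d0 +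
      ∑ p : S × A, ((1 - γ) * ∑' t : ℕ, γ ^ (t + 1) * marg d0 P pol t p.1 p.2) •
        (fun s' => P p.1 p.2 s') := by
  have hsum : ∀ s a, Summable (fun t : ℕ => γ ^ t * marg d0 P pol t s a) :=
    marg_summable hγ0 hγ1 hd0 hP hpol hd0sum hPsum hpolsum
  funext s'
  have h1 : ∑ a, occ γ d0 P pol s' a
      = (1 - γ) * ∑' t : ℕ, ∑ a, γ ^ t * marg d0 P pol t s' a := by
    rw [Summable.tsum_finsetSum (fun a _ => hsum s' a)]
    simp [occ, Finset.mul_sum]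
  have hF : Summable (fun t : ℕ => ∑ a, γ ^ t * marg d0 P pol t s' a) :=
    summable_sum fun a _ => hsum s' a
  rw [h1, Summable.tsum_eq_zero_add hF]
  have h0 : ∑ a, γ ^ 0 * marg d0 P pol 0 s' a = d0 s' := by
    simp [marg, ← Finset.mul_sum, hpolsum]
  have hstep : ∀ t : ℕ, ∑ a, γ ^ (t + 1) * marg d0 P pol (t + 1) s' a
      = ∑ p : S × A, (γ ^ (t + 1) * marg d0 P pol t p.1 p.2) * P p.1 p.2 s' := by
    intro t
    rw [Fintype.sum_prod_type]
    simp only [marg, ← Finset.mul_sum, hpolsum, mul_one]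
    rw [Finset.mul_sum]
    congr 1; ext s
    rw [Finset.mul_sum]
    congr 1; ext a; ring
  have h2 : ∑' t : ℕ, ∑ a, γ ^ (t + 1) * marg d0 P pol (t + 1) s' a
      = ∑ p : S × A, (∑' t : ℕ, γ ^ (t + 1) * marg d0 P pol t p.1 p.2) * P p.1 p.2 s' := by
    have := Summable.tsum_finsetSum (f := fun (p : S × A) (t : ℕ) =>
        (γ ^ (t + 1) * marg d0 P pol t p.1 p.2) * P p.1 p.2 s') (s := Finset.univ)
      (fun p _ => by
        have : Summable (fun t : ℕ => γ ^ (t + 1) * marg d0 P pol t p.1 p.2) := by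
          simpa [pow_succ, mul_comm, mul_assoc, mul_left_comm] using (hsum p.1 p.2).mul_left γ
        exact this.mul_right _)
    calc ∑' t : ℕ, ∑ a, γ ^ (t + 1) * marg d0 P pol (t + 1) s' a
        = ∑' t : ℕ, ∑ p : S × A, (γ ^ (t + 1) * marg d0 P pol t p.1 p.2) * P p.1 p.2 s' := by
          exact tsum_congr hstep
      _ = ∑ p : S × A, (∑' t : ℕ, γ ^ (t + 1) * marg d0 P pol t p.1 p.2) * P p.1 p.2 s' := by
          rw [this]
          exact Finset.sum_congr rfl fun p _ => tsum_mul_right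
  rw [h0, h2]
  simp only [Pi.add_apply, Pi.smul_apply, Finset.sum_apply, smul_eq_mul]
  rw [mul_add, Finset.mul_sum]
  congr 1
  exact Finset.sum_congr rfl fun p _ => by ring

end helpers

/-- State occupancy vectors lie in the row span of `[P; d₀ᵀ]`; hence the span of all
    occupancy vectors has dimension at most `rank(P) + 1`. -/
theorem stmt17 {S A : Type*} [Fintype S] [Fintype A]
    (γ : ℝ) (hγ0 : 0 ≤ γ) (hγ1 : γ < 1)
    (d0 : S → ℝ) (hd0 : ∀ s, 0 ≤ d0 s) (hd0sum : ∑ s, d0 s = 1)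
    (P : S → A → S → ℝ) (hP : ∀ s a s', 0 ≤ P s a s') (hPsum : ∀ s a, ∑ s', P s a s' = 1)
    (k : ℕ)
    (hk : (Matrix.of fun (p : S × A) (s' : S) => P p.1 p.2 s').rank = k) :
    (∀ pol : S → A → ℝ, (∀ s a, 0 ≤ pol s a) → (∀ s, ∑ a, pol s a = 1) →
      (fun s' => ∑ a, occ γ d0 P pol s' a) ∈
        Submodule.span ℝ ((Set.range fun p : S × A => fun s' => P p.1 p.2 s') ∪ {d0}))
    ∧ Module.finrank ℝ (Submodule.span ℝ
        {ν : S → ℝ | ∃ pol : S → A → ℝ, (∀ s a, 0 ≤ pol s a) ∧ (∀ s, ∑ a, pol s a = 1) ∧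
          ν = fun s' => ∑ a, occ γ d0 P pol s' a}) ≤ k + 1 := by
  have hmem : ∀ pol : S → A → ℝ, (∀ s a, 0 ≤ pol s a) → (∀ s, ∑ a, pol s a = 1) →
      (fun s' => ∑ a, occ γ d0 P pol s' a) ∈
        Submodule.span ℝ ((Set.range fun p : S × A => fun s' => P p.1 p.2 s') ∪ {d0}) := by
    intro pol hpol hpolsum
    rw [occ_decomp hγ0 hγ1 hd0 hP hpol hd0sum hPsum hpolsum]
    apply Submodule.add_mem
    · exact Submodule.smul_mem _ _ (Submodule.subset_span (Or.inr rfl))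
    · exact Submodule.sum_mem _ fun p _ =>
        Submodule.smul_mem _ _ (Submodule.subset_span (Or.inl ⟨p, rfl⟩))
  refine ⟨hmem, ?_⟩
  have hle : Submodule.span ℝ
      {ν : S → ℝ | ∃ pol : S → A → ℝ, (∀ s a, 0 ≤ pol s a) ∧ (∀ s, ∑ a, pol s a = 1) ∧
        ν = fun s' => ∑ a, occ γ d0 P pol s' a} ≤
      Submodule.span ℝ ((Set.range fun p : S × A => fun s' => P p.1 p.2 s') ∪ {d0}) := by
    rw [Submodule.span_le]
    rintro ν ⟨pol, hpol, hpolsum, rfl⟩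
    exact hmem pol hpol hpolsum
  refine le_trans (Submodule.finrank_mono hle) ?_
  rw [Submodule.span_union]
  refine le_trans (Submodule.finrank_add_le_finrank_add_finrank _ _) ?_
  have hr : Module.finrank ℝ
      (Submodule.span ℝ (Set.range fun p : S × A => fun s' => P p.1 p.2 s')) = k := by
    rw [← hk, Matrix.rank_eq_finrank_span_row]
    rfl
  have hd0ne : d0 ≠ 0 := by
    intro h
    rw [h] at hd0sum
    simp at hd0sum
  have hs : Module.finrank ℝ (Submodule.span ℝ ({d0} : Set (S → ℝ))) = 1 :=
    finrank_span_singleton hd0ne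
  rw [hr, hs]
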